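/- arXiv:1511.03996 — 2 statements merged into one kernel-verified Lean document; each statement's English description precedes it below -/
import Mathlib

section
/- For all real numbers x and y with |x| ≤ π/2 and |y| < π/2, one has (x − y)·(sin x − sin y) ≥ ((1 − sin|y|)/(π/2 − |y|))·(x − y)². -/
/-!
The constant `c = (1 - sin y) / (π/2 - y)` is the slope of `sin` from `y` to `π/2`, and the claim
says that it bounds the slope of `sin` between `x` and `y` from below. Since `sin` is odd we may assume
`0 ≤ y`. For `0 ≤ x` this is concavity of `sin` on `[0, π]`: secant slopes from `y` decrease as the
other endpoint moves right, up to `π/2`. For `x < 0`, concavity also gives `c ≤ 2/π`, the slope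
from `0` to `π/2`, so by Jordan's inequality `c t ≤ sin t` on `[0, π/2]`; adding this at `t = y`
and `t = -x` gives `sin y - sin x ≥ c (y - x)`.
-/

open Real

theorem sub_mul_sub_eq_sq_mul_slope {𝕜 : Type*} [Field 𝕜] (f : 𝕜 → 𝕜) (a b : 𝕜) :
    (b - a) * (f b - f a) = (b - a) ^ 2 * slope f a b := by
  rw [← vsub_eq_sub (f b), ← sub_smul_slope f a b, smul_eq_mul]
  ring

theorem Function.Odd.slope_neg {𝕜 : Type*} [Field 𝕜] {f : 𝕜 → 𝕜} (hf : f.Odd) (a b : 𝕜) :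
    slope f (-a) (-b) = slope f a b := by
  rw [slope_def_field, slope_def_field, hf, hf, ← neg_div_neg_eq]
  ring_nf

namespace Real

theorem slope_sin_pi_div_two (y : ℝ) : slope sin y (π / 2) = (1 - sin y) / (π / 2 - y) := by
  rw [slope_def_field, sin_pi_div_two]

theorem antitoneOn_slope_sin {a : ℝ} (ha : a ∈ Set.Icc 0 π) :
    AntitoneOn (slope sin a) (Set.Icc 0 π \ {a}) :=
  strictConcaveOn_sin_Icc.concaveOn.slope_anti ha

theorem slope_sin_pi_div_two_le_two_div_pi {y : ℝ} (hy0 : 0 ≤ y) (hy : y < π / 2) :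
    slope sin y (π / 2) ≤ 2 / π := by
  have hπ := pi_pos
  have h := antitoneOn_slope_sin (a := π / 2) ⟨by positivity, by linarith⟩
    ⟨⟨le_rfl, hπ.le⟩, (half_pos hπ).ne⟩ ⟨⟨hy0, by linarith⟩, hy.ne⟩ hy0
  rw [slope_comm]
  refine h.trans_eq ?_
  rw [slope_def_field, sin_pi_div_two, sin_zero]
  field_simp
  ring

theorem slope_sin_pi_div_two_mul_le_sin {y t : ℝ} (hy0 : 0 ≤ y) (hy : y < π / 2) (ht0 : 0 ≤ t)
    (ht : t ≤ π / 2) : slope sin y (π / 2) * t ≤ sin t :=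
  (mul_le_mul_of_nonneg_right (slope_sin_pi_div_two_le_two_div_pi hy0 hy) ht0).trans
    (mul_le_sin ht0 ht)

theorem slope_sin_pi_div_two_le_slope_sin {x y : ℝ} (hy0 : 0 ≤ y) (hy : y < π / 2)
    (hx : |x| ≤ π / 2) (hxy : x ≠ y) : slope sin y (π / 2) ≤ slope sin y x := by
  have hπ := pi_pos
  obtain ⟨hx₁, hx₂⟩ := abs_le.mp hx
  rcases le_or_gt 0 x with hx0 | hx0
  · exact antitoneOn_slope_sin ⟨hy0, by linarith⟩ ⟨⟨hx0, by linarith⟩, hxy⟩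
      ⟨⟨by positivity, by linarith⟩, hy.ne'⟩ hx₂
  have hyx : 0 < y - x := by linarith
  have hsy := slope_sin_pi_div_two_mul_le_sin hy0 hy hy0 hy.le
  have hsx := slope_sin_pi_div_two_mul_le_sin hy0 hy (neg_nonneg.mpr hx0.le) (by linarith)
  rw [sin_neg] at hsx
  rw [slope_comm sin y x, slope_def_field sin x y, le_div_iff₀ hyx]
  linear_combination hsy + hsx

theorem slope_sin_abs_pi_div_two_le_slope_sin {x y : ℝ} (hx : |x| ≤ π / 2) (hy : |y| < π / 2)
    (hxy : x ≠ y) : slope sin |y| (π / 2) ≤ slope sin y x := by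
  rcases le_or_gt 0 y with hy0 | hy0
  · rw [abs_of_nonneg hy0] at hy ⊢
    exact slope_sin_pi_div_two_le_slope_sin hy0 hy hx hxy
  · rw [abs_of_neg hy0] at hy ⊢
    rw [← Function.Odd.slope_neg sin_neg y x]
    exact slope_sin_pi_div_two_le_slope_sin (by linarith) hy (by rwa [abs_neg])
      (neg_injective.ne hxy)

end Real

/-- For all real numbers `x` and `y` with `|x| ≤ π/2` and `|y| < π/2`, one has
`(x − y)·(sin x − sin y) ≥ ((1 − sin|y|)/(π/2 − |y|))·(x − y)²`. -/
theorem sector_bound_sin (x y : ℝ) (hx : |x| ≤ π / 2) (hy : |y| < π / 2) :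
    (x - y) * (Real.sin x - Real.sin y) ≥
      ((1 - Real.sin |y|) / (π / 2 - |y|)) * (x - y) ^ 2 := by
  rcases eq_or_ne x y with rfl | hxy
  · simp
  rw [ge_iff_le, ← slope_sin_pi_div_two, sub_mul_sub_eq_sq_mul_slope sin y x, mul_comm]
  exact mul_le_mul_of_nonneg_left (slope_sin_abs_pi_div_two_le_slope_sin hx hy hxy) (sq_nonneg _)
end

section
/- Let 0 < γ < π/2 and set g = (1 − sin γ)/(π/2 − γ). Then for all real numbers x and y with |x| ≤ π/2 and |y| ≤ γ, one has g·(x − y)² ≤ (x − y)·(sin x − sin y) ≤ (x − y)². -/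
open Real

private lemma abs_sin_le' (t : ℝ) : |Real.sin t| ≤ |t| := by
  have key : ∀ s : ℝ, 0 ≤ s → |Real.sin s| ≤ s := by
    intro s hs
    rcases le_total s 1 with h1 | h1
    · have h0 : 0 ≤ Real.sin s :=
        Real.sin_nonneg_of_nonneg_of_le_pi hs (by linarith [Real.pi_gt_three])
      rw [abs_of_nonneg h0]; exact Real.sin_le hs
    · calc |Real.sin s| ≤ 1 := Real.abs_sin_le_one s
        _ ≤ s := h1
  rcases le_total 0 t with h | h
  · rw [abs_of_nonneg h]; exact key t h
  · rw [abs_of_nonpos h, ← abs_neg, ← Real.sin_neg]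
    exact key (-t) (by linarith)

/-- `t * cos t ≤ sin t` for `0 ≤ t < π/2`. -/
private lemma mul_cos_le_sin' {t : ℝ} (h0 : 0 ≤ t) (h1 : t < π / 2) :
    t * Real.cos t ≤ Real.sin t := by
  rcases eq_or_lt_of_le h0 with rfl | h0
  · simp
  · have hc : 0 < Real.cos t := Real.cos_pos_of_mem_Ioo ⟨by linarith [Real.pi_pos], h1⟩
    have := Real.lt_tan h0 h1
    rw [Real.tan_eq_sin_div_cos] at this
    calc t * Real.cos t ≤ (Real.sin t / Real.cos t) * Real.cos t := by nlinarith
      _ = Real.sin t := by field_simp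

/-- chord slope bound inside `[-γ, γ]`. -/
private lemma inner_slope {γ a b : ℝ} (hγ : γ < π / 2) (ha : |a| ≤ γ) (hb : |b| ≤ γ)
    (hab : a ≤ b) : Real.cos γ * (b - a) ≤ Real.sin b - Real.sin a := by
  have hπ : (0:ℝ) < π := Real.pi_pos
  rw [abs_le] at ha hb
  have hd0 : 0 ≤ (b - a) / 2 := by linarith
  have hd1 : (b - a) / 2 < π / 2 := by linarith
  have hcm : Real.cos γ ≤ Real.cos ((b + a) / 2) := by
    rw [← Real.cos_abs ((b + a) / 2)]
    exact Real.cos_le_cos_of_nonneg_of_le_pi (abs_nonneg _) (by linarith)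
      (abs_le.mpr ⟨by linarith, by linarith⟩)
  have hcm0 : 0 ≤ Real.cos ((b + a) / 2) :=
    le_trans (Real.cos_nonneg_of_mem_Icc ⟨by linarith, hγ.le⟩) hcm
  have hsd : (b - a) / 2 * Real.cos ((b - a) / 2) ≤ Real.sin ((b - a) / 2) :=
    mul_cos_le_sin' hd0 hd1
  have key : Real.sin b - Real.sin a = 2 * Real.sin ((b - a) / 2) * Real.cos ((b + a) / 2) :=
    Real.sin_sub_sin b a
  have hcγ : 0 ≤ Real.cos γ := Real.cos_nonneg_of_mem_Icc ⟨by linarith, hγ.le⟩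
  -- cos m * cos d = (cos a + cos b)/2 ≥ cos γ
  have ea : Real.cos a = Real.cos ((b + a) / 2) * Real.cos ((b - a) / 2)
      + Real.sin ((b + a) / 2) * Real.sin ((b - a) / 2) := by
    rw [show a = (b + a) / 2 - (b - a) / 2 by ring, Real.cos_sub]
    ring_nf
  have eb : Real.cos b = Real.cos ((b + a) / 2) * Real.cos ((b - a) / 2)
      - Real.sin ((b + a) / 2) * Real.sin ((b - a) / 2) := by
    rw [show b = (b + a) / 2 + (b - a) / 2 by ring, Real.cos_add]
    ring_nf
  have prod : Real.cos ((b + a) / 2) * Real.cos ((b - a) / 2)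
      = (Real.cos a + Real.cos b) / 2 := by rw [ea, eb]; ring
  have hca : Real.cos γ ≤ Real.cos a := by
    rw [← Real.cos_abs a]
    exact Real.cos_le_cos_of_nonneg_of_le_pi (abs_nonneg _) (by linarith)
      (abs_le.mpr ⟨ha.1, ha.2⟩)
  have hcb : Real.cos γ ≤ Real.cos b := by
    rw [← Real.cos_abs b]
    exact Real.cos_le_cos_of_nonneg_of_le_pi (abs_nonneg _) (by linarith)
      (abs_le.mpr ⟨hb.1, hb.2⟩)
  nlinarith [mul_le_mul_of_nonneg_left hsd hcm0]

/-- Let `0 < γ < π/2` and `g = (1 − sin γ)/(π/2 − γ)`. Then for all real `x, y` with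
`|x| ≤ π/2` and `|y| ≤ γ`, one has `g·(x − y)² ≤ (x − y)·(sin x − sin y) ≤ (x − y)²`. -/
theorem sector_bound_sin_gamma (γ : ℝ) (hγ0 : 0 < γ) (hγ1 : γ < π / 2)
    (g : ℝ) (hg : g = (1 - Real.sin γ) / (π / 2 - γ))
    (x y : ℝ) (hx : |x| ≤ π / 2) (hy : |y| ≤ γ) :
    g * (x - y) ^ 2 ≤ (x - y) * (Real.sin x - Real.sin y) ∧
      (x - y) * (Real.sin x - Real.sin y) ≤ (x - y) ^ 2 := by
  have hπ : (0:ℝ) < π := Real.pi_pos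
  have hden : 0 < π / 2 - γ := by linarith
  have hgdef : g * (π / 2 - γ) = 1 - Real.sin γ := by
    rw [hg, div_mul_cancel₀ _ hden.ne']
  have hgle : g ≤ Real.cos γ := by
    have hsub : Real.sin (π/2) - Real.sin γ
        = 2 * Real.sin ((π/2 - γ)/2) * Real.cos ((π/2 + γ)/2) := Real.sin_sub_sin _ _
    have hsd : Real.sin ((π/2 - γ)/2) ≤ (π/2 - γ)/2 := Real.sin_le (by linarith)
    have hsd0 : 0 ≤ Real.sin ((π/2 - γ)/2) :=
      Real.sin_nonneg_of_nonneg_of_le_pi (by linarith) (by linarith)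
    have hcm : Real.cos ((π/2 + γ)/2) ≤ Real.cos γ :=
      Real.cos_le_cos_of_nonneg_of_le_pi hγ0.le (by linarith) (by linarith)
    have hcm0 : 0 ≤ Real.cos ((π/2 + γ)/2) :=
      Real.cos_nonneg_of_mem_Icc ⟨by linarith, by linarith⟩
    have h1 : 1 - Real.sin γ ≤ Real.cos γ * (π/2 - γ) := by
      rw [Real.sin_pi_div_two] at hsub
      nlinarith
    rw [hg, div_le_iff₀ hden]; linarith
  have hgle' : g ≤ Real.cos γ := hgle
  -- key slope lemma
  have key : ∀ a b : ℝ, |a| ≤ π/2 → |b| ≤ γ → b ≤ a →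
      g * (a - b) ≤ Real.sin a - Real.sin b := by
    intro a b ha hb hba
    have hb' := abs_le.mp hb
    rcases le_total a γ with haγ | hγa
    · have ha' : |a| ≤ γ := abs_le.mpr ⟨by rw [abs_le] at ha; linarith, haγ⟩
      have := inner_slope hγ1 hb ha' hba
      nlinarith [mul_nonneg (sub_nonneg.mpr hgle) (sub_nonneg.mpr hba)]
    · have ha' := abs_le.mp ha
      have h2 : g * (γ - b) ≤ Real.sin γ - Real.sin b := by
        have := inner_slope hγ1 hb (by rw [abs_of_nonneg hγ0.le]) hb'.2
        nlinarith [mul_nonneg (sub_nonneg.mpr hgle) (sub_nonneg.mpr hb'.2)]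
      have h1 : g * (a - γ) ≤ Real.sin a - Real.sin γ := by
        rcases eq_or_lt_of_le hγa with rfl | hγa'
        · simp
        rcases eq_or_lt_of_le ha'.2 with ha2 | ha2
        · rw [ha2, Real.sin_pi_div_two]; linarith [hgdef]
        have hadj := strictConcaveOn_sin_Icc.concaveOn.slope_anti_adjacent
          (x := γ) (y := a) (z := π/2)
          ⟨hγ0.le, by linarith⟩ ⟨by linarith, by linarith⟩ hγa' ha2
        rw [Real.sin_pi_div_two] at hadj
        have e1 : (1 - Real.sin a) * (a - γ) ≤ (Real.sin a - Real.sin γ) * (π/2 - a) := by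
          have d1 : 0 < a - γ := by linarith
          have d2 : 0 < π/2 - a := by linarith
          rw [div_le_div_iff₀ d2 d1] at hadj
          nlinarith
        -- mediant: g ≤ slope(γ, a)
        nlinarith [e1, hgdef]
      linarith
  -- upper bound
  have hub : (x - y) * (Real.sin x - Real.sin y) ≤ (x - y) ^ 2 := by
    have h1 : |Real.sin x - Real.sin y| ≤ |x - y| := by
      rw [Real.sin_sub_sin, abs_mul, abs_mul]
      have e2 : |(x - y)/2| = |x - y|/2 := by rw [abs_div, abs_two]
      have s1 := abs_sin_le' ((x - y)/2)
      have c1 := abs_cos_le_one ((x + y)/2)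
      have n1 : |(2:ℝ)| = 2 := by norm_num
      calc |(2:ℝ)| * |Real.sin ((x - y)/2)| * |Real.cos ((x + y)/2)|
          = 2 * (|Real.sin ((x - y)/2)| * |Real.cos ((x + y)/2)|) := by rw [n1]; ring
        _ ≤ 2 * ((|x - y|/2) * 1) := by
            have s1' : |Real.sin ((x - y)/2)| ≤ |x - y|/2 := e2 ▸ s1
            nlinarith [mul_le_mul s1' c1 (abs_nonneg _) (by positivity : (0:ℝ) ≤ |x - y|/2)]
        _ = |x - y| := by ring
    calc (x - y) * (Real.sin x - Real.sin y) ≤ |x - y| * |Real.sin x - Real.sin y| := by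
          rw [← abs_mul]; exact le_abs_self _
      _ ≤ |x - y| * |x - y| := by
          exact mul_le_mul_of_nonneg_left h1 (abs_nonneg _)
      _ = (x - y)^2 := by rw [abs_mul_abs_self]; ring
  refine ⟨?_, hub⟩
  rcases le_total y x with hxy | hxy
  · have := key x y hx hy hxy
    nlinarith
  · have := key (-x) (-y) (by rwa [abs_neg]) (by rwa [abs_neg]) (by linarith)
    rw [Real.sin_neg, Real.sin_neg] at this
    nlinarith
end
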